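/- arXiv:2003.13829 — 3 statements merged into one kernel-verified Lean document; each statement's English description precedes it below -/
import Mathlib

section
/- Every lattice Λ in ℝ² with covolume strictly less than √3/2 contains a nonzero point of the open unit disc D = {(x,y) : x² + y² < 1}. Equivalently, Δ(D) = √3/2 (together with the admissibility of the hexagonal lattice of covolume √3/2). -/
open MeasureTheory

noncomputable section

/-- The lattice `g ℤ²` in `ℝ²`. -/
def lattice2 (g : Matrix (Fin 2) (Fin 2) ℝ) : Set (Fin 2 → ℝ) :=
  {x | ∃ m : Fin 2 → ℤ, x = g.mulVec (fun i => (m i : ℝ))}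

/-- `K`-admissibility: the lattice meets `K` only at the origin. -/
def Admissible2 (K : Set (Fin 2 → ℝ)) (g : Matrix (Fin 2) (Fin 2) ℝ) : Prop :=
  lattice2 g ∩ K = {0}

/-- The critical determinant `Δ(K)`. -/
def critDet2 (K : Set (Fin 2 → ℝ)) : ℝ :=
  sInf {d | ∃ g : Matrix (Fin 2) (Fin 2) ℝ, g.det ≠ 0 ∧ Admissible2 K g ∧ d = |g.det|}

/-- The critical locus `𝓛(K)`: the set of `K`-admissible lattices of covolume `Δ(K)`. -/
def critLocus2 (K : Set (Fin 2 → ℝ)) : Set (Set (Fin 2 → ℝ)) :=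
  {L | ∃ g : Matrix (Fin 2) (Fin 2) ℝ, g.det ≠ 0 ∧ L = lattice2 g ∧ Admissible2 K g ∧
    |g.det| = critDet2 K}

/-- The open unit disc in `ℝ²`. -/
def unitDisc : Set (Fin 2 → ℝ) := {x | x 0 ^ 2 + x 1 ^ 2 < 1}

/-- The open unit square `(-1,1)²`. -/
def openSquare : Set (Fin 2 → ℝ) := {x | |x 0| < 1 ∧ |x 1| < 1}

/-- A matrix generating the hexagonal lattice `ℤ·(1,0) + ℤ·(1/2,√3/2)`. -/
def hexMat : Matrix (Fin 2) (Fin 2) ℝ := !![1, 1/2; 0, Real.sqrt 3 / 2]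

open Real
open scoped Matrix

/-!
Let `Δ = |det g|`. Minkowski's convex body theorem, applied to the disc `|x|² < 2Δ` of area
`2πΔ > 4Δ`, gives a nonzero lattice vector `u` with `|u|² < 2Δ`, which we may take primitive;
unless `u` itself lies in the unit disc, `1 ≤ |u|²`. Complete `u` to a basis `(u, v)` of the
lattice, so that `u × v = ±Δ`, and reduce `v` modulo `u` until `|⟪v, u⟫| ≤ |u|²/2`. Lagrange's
identity `|v|²|u|² = ⟪v, u⟫² + Δ²` then gives `|v|² ≤ |u|²/4 + Δ²/|u|²`, which is `< 1` when
`1 ≤ |u|² < 2Δ < √3`. The hexagonal lattice, on which `|x|²` is the integral form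
`a² + ab + b²`, shows that `√3/2` is attained.
-/

theorem Matrix.exists_ne_zero_int_mulVec_mem_of_volume_gt {ι : Type*} [Fintype ι]
    [DecidableEq ι] (g : Matrix ι ι ℝ) (hg : g.det ≠ 0) {s : Set (ι → ℝ)}
    (h_symm : ∀ x ∈ s, -x ∈ s) (h_conv : Convex ℝ s)
    (h : ENNReal.ofReal |g.det| * 2 ^ Fintype.card ι < volume s) :
    ∃ m : ι → ℤ, m ≠ 0 ∧ g *ᵥ (fun i => (m i : ℝ)) ∈ s := by
  let b := (Pi.basisFun ℝ ι).map (g.toLinearEquiv' (g.invertibleOfIsUnitDet hg.isUnit))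
  have hb : ∀ i, b i = g.col i := fun i => by
    rw [Module.Basis.map_apply, Pi.basisFun_apply]; exact g.mulVec_single_one i
  have hvol : volume (ZSpan.fundamentalDomain b) = ENNReal.ofReal |g.det| := by
    rw [ZSpan.volume_fundamentalDomain, show Matrix.of b = gᵀ by ext; simp [hb],
      Matrix.det_transpose]
  have : Countable (Submodule.span ℤ (Set.range b)).toAddSubgroup :=
    inferInstanceAs (Countable (Submodule.span ℤ (Set.range b)))
  obtain ⟨⟨x, hx⟩, hx0, hxs⟩ := exists_ne_zero_mem_lattice_of_measure_mul_two_pow_lt_measure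
    (ZSpan.isAddFundamentalDomain' b volume) h_symm h_conv
    (by rwa [hvol, Module.finrank_fintype_fun_eq_card])
  obtain ⟨c, rfl⟩ := (Submodule.mem_span_range_iff_exists_fun ℤ).1 hx
  have hc : ∑ i, c i • b i = g *ᵥ (fun i => (c i : ℝ)) := by
    ext j; simp [hb, Matrix.mulVec, dotProduct, mul_comm]
  refine ⟨c, fun h => hx0 ?_, hc ▸ hxs⟩
  simp [h]

theorem setOf_sq_add_sq_lt_eq_preimage_ball (r : ℝ) :
    {x : Fin 2 → ℝ | x 0 ^ 2 + x 1 ^ 2 < r} =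
      WithLp.toLp 2 ⁻¹' Metric.ball (0 : EuclideanSpace ℝ (Fin 2)) √r := by
  ext x
  rw [Set.mem_preimage, mem_ball_zero_iff, lt_sqrt (norm_nonneg _),
    EuclideanSpace.real_norm_sq_eq, Fin.sum_univ_two]
  rfl

theorem volume_setOf_sq_add_sq_lt {r : ℝ} (hr : 0 ≤ r) :
    volume {x : Fin 2 → ℝ | x 0 ^ 2 + x 1 ^ 2 < r} = ENNReal.ofReal (π * r) := by
  rw [setOf_sq_add_sq_lt_eq_preimage_ball,
    (PiLp.volume_preserving_toLp (Fin 2)).measure_preimage measurableSet_ball.nullMeasurableSet,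
    EuclideanSpace.volume_ball_fin_two, ← ENNReal.ofReal_pow (sqrt_nonneg _),
    sq_sqrt hr, ← ENNReal.ofReal_mul hr, mul_comm]

theorem Matrix.exists_ne_zero_int_mulVec_sq_add_sq_lt (g : Matrix (Fin 2) (Fin 2) ℝ)
    (hg : g.det ≠ 0) {r : ℝ} (hr : 4 * |g.det| < π * r) :
    ∃ m : Fin 2 → ℤ, m ≠ 0 ∧
      (g *ᵥ fun i => (m i : ℝ)) 0 ^ 2 + (g *ᵥ fun i => (m i : ℝ)) 1 ^ 2 < r := by
  have hr0 : 0 ≤ r := nonneg_of_mul_nonneg_right (by linarith [abs_nonneg g.det]) pi_pos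
  refine g.exists_ne_zero_int_mulVec_mem_of_volume_gt hg (s := {x | x 0 ^ 2 + x 1 ^ 2 < r})
    (fun x hx => ?_) ?_ ?_
  · simpa using hx
  · rw [setOf_sq_add_sq_lt_eq_preimage_ball]
    exact (convex_ball _ _).linear_preimage (WithLp.linearEquiv 2 ℝ (Fin 2 → ℝ)).symm.toLinearMap
  · rw [volume_setOf_sq_add_sq_lt hr0, Fintype.card_fin, ← ENNReal.ofReal_ofNat,
      ← ENNReal.ofReal_pow zero_le_two, ← ENNReal.ofReal_mul (abs_nonneg _),
      ENNReal.ofReal_lt_ofReal_iff (by linarith [abs_nonneg g.det])]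
    linarith

theorem exists_isCoprime_smul_eq {m : Fin 2 → ℤ} (hm : m ≠ 0) :
    ∃ k : ℤ, k ≠ 0 ∧ ∃ m' : Fin 2 → ℤ, IsCoprime (m' 0) (m' 1) ∧ m = k • m' := by
  have hgcd : 0 < Int.gcd (m 0) (m 1) := by
    refine Int.gcd_pos_iff.2 (not_and_or.1 fun h => hm ?_)
    ext i; fin_cases i <;> simp [h.1, h.2]
  obtain ⟨k, a, b, hk, hab, ha, hb⟩ := Int.exists_gcd_one' hgcd
  refine ⟨k, by positivity, ![a, b], Int.isCoprime_iff_gcd_eq_one.2 hab, ?_⟩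
  ext i; fin_cases i <;> simp [ha, hb, mul_comm]

theorem IsCoprime.exists_mul_sub_mul_eq_one {a b : ℤ} (h : IsCoprime a b) :
    ∃ q : Fin 2 → ℤ, a * q 1 - b * q 0 = 1 := by
  obtain ⟨x, y, hxy⟩ := h
  exact ⟨![-y, x], by simp; linarith⟩

theorem Matrix.mulVec_cross_fin_two (g : Matrix (Fin 2) (Fin 2) ℝ) (p q : Fin 2 → ℝ) :
    (g *ᵥ p) 0 * (g *ᵥ q) 1 - (g *ᵥ p) 1 * (g *ᵥ q) 0 = g.det * (p 0 * q 1 - p 1 * q 0) := by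
  simp only [Matrix.mulVec, dotProduct, Matrix.det_fin_two, Fin.sum_univ_two]
  ring

theorem exists_int_abs_sub_mul_le (a : ℝ) {t : ℝ} (ht : 0 < t) :
    ∃ n : ℤ, |a - n * t| ≤ t / 2 := by
  refine ⟨round (a / t), ?_⟩
  calc |a - round (a / t) * t| = |a / t - round (a / t)| * t := by
        rw [← abs_of_pos ht, ← abs_mul, abs_of_pos ht, sub_mul, div_mul_cancel₀ _ ht.ne']
    _ ≤ 1 / 2 * t := by gcongr; exact abs_sub_round _
    _ = t / 2 := by ring

theorem sq_add_sq_lt_of_abs_le_half {p d t : ℝ} (hd : d < √3 / 2) (ht₁ : 1 ≤ t)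
    (ht₂ : t < 2 * d) (hp : |p| ≤ t / 2) : p ^ 2 + d ^ 2 < t := by
  -- `t - t² / 4 ≥ 3 / 4 > d²` on `[1, 3]`
  have hd₂ : d ^ 2 < 3 / 4 := by
    have h3 : (√3 / 2) ^ 2 = 3 / 4 := by rw [div_pow, sq_sqrt zero_le_three]; norm_num
    nlinarith
  have hp₂ : p ^ 2 ≤ t ^ 2 / 4 := by
    rw [← sq_abs]; nlinarith [abs_nonneg p]
  have ht₃ : t ≤ 3 := by nlinarith
  nlinarith [mul_nonneg (sub_nonneg.2 ht₁) (sub_nonneg.2 ht₃)]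

theorem exists_int_sq_add_sq_sub_mul_lt_one (u v : Fin 2 → ℝ)
    (hd : |u 0 * v 1 - u 1 * v 0| < √3 / 2) (hu₁ : 1 ≤ u 0 ^ 2 + u 1 ^ 2)
    (hu₂ : u 0 ^ 2 + u 1 ^ 2 < 2 * |u 0 * v 1 - u 1 * v 0|) :
    ∃ n : ℤ, (v 0 - n * u 0) ^ 2 + (v 1 - n * u 1) ^ 2 < 1 := by
  have ht : 0 < u 0 ^ 2 + u 1 ^ 2 := by linarith
  obtain ⟨n, hn⟩ := exists_int_abs_sub_mul_le (u 0 * v 0 + u 1 * v 1) ht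
  refine ⟨n, (mul_lt_mul_iff_left₀ ht).1 ?_⟩
  have lagrange : ((v 0 - n * u 0) ^ 2 + (v 1 - n * u 1) ^ 2) * (u 0 ^ 2 + u 1 ^ 2) =
      (u 0 * v 0 + u 1 * v 1 - n * (u 0 ^ 2 + u 1 ^ 2)) ^ 2 + |u 0 * v 1 - u 1 * v 0| ^ 2 := by
    rw [sq_abs]; ring
  rw [lagrange, one_mul]
  exact sq_add_sq_lt_of_abs_le_half hd hu₁ hu₂ hn

theorem exists_ne_zero_mem_lattice2_inter_unitDisc (g : Matrix (Fin 2) (Fin 2) ℝ)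
    (hg : g.det ≠ 0) (hlt : |g.det| < √3 / 2) : ∃ x ∈ lattice2 g ∩ unitDisc, x ≠ 0 := by
  obtain ⟨m₀, hm₀, hshort₀⟩ := g.exists_ne_zero_int_mulVec_sq_add_sq_lt hg (r := 2 * |g.det|)
    (by nlinarith [pi_gt_three, abs_pos.2 hg])
  obtain ⟨k, hk, m, hm, rfl⟩ := exists_isCoprime_smul_eq hm₀
  obtain ⟨q, hq⟩ := hm.exists_mul_sub_mul_eq_one
  set u := g *ᵥ fun i => (m i : ℝ)
  set v := g *ᵥ fun i => (q i : ℝ)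
  have hshort : u 0 ^ 2 + u 1 ^ 2 < 2 * |g.det| := by
    have hk₁ : (1 : ℝ) ≤ (k : ℝ) ^ 2 :=
      (one_le_sq_iff_one_le_abs _).2 (by exact_mod_cast Int.one_le_abs hk)
    have hku : (g *ᵥ fun i => ((k • m) i : ℝ)) = (k : ℝ) • u := by
      rw [← Matrix.mulVec_smul]; congr 1; ext i; simp
    rw [hku] at hshort₀
    simp only [Pi.smul_apply, smul_eq_mul, mul_pow] at hshort₀
    nlinarith [sq_nonneg (u 0), sq_nonneg (u 1)]
  have hcross : u 0 * v 1 - u 1 * v 0 = g.det := by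
    have hq' : (m 0 : ℝ) * q 1 - m 1 * q 0 = 1 := by exact_mod_cast hq
    rw [g.mulVec_cross_fin_two, hq', mul_one]
  by_cases hu : u 0 ^ 2 + u 1 ^ 2 < 1
  · refine ⟨u, ⟨⟨m, rfl⟩, hu⟩, fun h => hg ?_⟩
    rw [← hcross, h]; simp
  · obtain ⟨n, hn⟩ := exists_int_sq_add_sq_sub_mul_lt_one u v (hcross ▸ hlt) (not_lt.1 hu)
      (hcross ▸ hshort)
    refine ⟨v - (n : ℝ) • u, ⟨⟨q - n • m, ?_⟩, by simpa [unitDisc] using hn⟩, fun h => hg ?_⟩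
    · rw [← Matrix.mulVec_smul, ← Matrix.mulVec_sub]; congr 1; ext i; simp
    · rw [← hcross, sub_eq_zero.1 h]
      simp only [Pi.smul_apply, smul_eq_mul]
      ring

theorem zero_mem_lattice2 (g : Matrix (Fin 2) (Fin 2) ℝ) : 0 ∈ lattice2 g :=
  ⟨0, by simp only [Pi.zero_apply, Int.cast_zero]; exact (Matrix.mulVec_zero g).symm⟩

theorem admissible2_iff {K : Set (Fin 2 → ℝ)} (hK : (0 : Fin 2 → ℝ) ∈ K)
    (g : Matrix (Fin 2) (Fin 2) ℝ) :
    Admissible2 K g ↔ ∀ x ∈ lattice2 g ∩ K, x = 0 := by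
  simp [Admissible2, Set.eq_singleton_iff_unique_mem, zero_mem_lattice2, hK]

theorem det_hexMat : hexMat.det = √3 / 2 := by
  simp [hexMat, Matrix.det_fin_two_of]

theorem hexMat_mulVec_sq_add_sq (m : Fin 2 → ℤ) :
    (hexMat *ᵥ fun i => (m i : ℝ)) 0 ^ 2 + (hexMat *ᵥ fun i => (m i : ℝ)) 1 ^ 2 =
      ((m 0 ^ 2 + m 0 * m 1 + m 1 ^ 2 : ℤ) : ℝ) := by
  have h0 : (hexMat *ᵥ fun i => (m i : ℝ)) 0 = m 0 + m 1 / 2 := by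
    simp [hexMat, Matrix.mulVec, dotProduct, div_eq_inv_mul]
  have h1 : (hexMat *ᵥ fun i => (m i : ℝ)) 1 = √3 / 2 * m 1 := by
    simp [hexMat, Matrix.mulVec, dotProduct]
  rw [h0, h1, mul_pow, div_pow, sq_sqrt zero_le_three]
  push_cast
  ring

theorem Int.eq_zero_of_sq_add_mul_add_sq_lt_one {a b : ℤ} (h : a ^ 2 + a * b + b ^ 2 < 1) :
    a = 0 ∧ b = 0 := by
  constructor <;> nlinarith [sq_nonneg (a + b), sq_nonneg a, sq_nonneg b]

theorem admissible2_unitDisc_hexMat : Admissible2 unitDisc hexMat := by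
  rw [admissible2_iff (by simp [unitDisc])]
  rintro _ ⟨⟨m, rfl⟩, hm⟩
  have hlt : ((m 0 ^ 2 + m 0 * m 1 + m 1 ^ 2 : ℤ) : ℝ) < 1 := hexMat_mulVec_sq_add_sq m ▸ hm
  obtain ⟨h0, h1⟩ := Int.eq_zero_of_sq_add_mul_add_sq_lt_one (by exact_mod_cast hlt)
  have : m = 0 := by ext i; fin_cases i <;> simp [h0, h1]
  simp [this]

/-- Every lattice of covolume `< √3/2` meets the open unit disc nontrivially, and the
critical determinant of the disc is `√3/2`. -/
theorem critical_determinant_of_disc :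
    (∀ g : Matrix (Fin 2) (Fin 2) ℝ, g.det ≠ 0 → |g.det| < Real.sqrt 3 / 2 →
      ∃ x ∈ lattice2 g ∩ unitDisc, x ≠ 0) ∧
    critDet2 unitDisc = Real.sqrt 3 / 2 := by
  refine ⟨exists_ne_zero_mem_lattice2_inter_unitDisc, IsLeast.csInf_eq ⟨?_, ?_⟩⟩
  · have hpos : (0 : ℝ) < √3 / 2 := by positivity
    exact ⟨hexMat, det_hexMat ▸ hpos.ne', admissible2_unitDisc_hexMat,
      by rw [det_hexMat, abs_of_pos hpos]⟩
  · rintro _ ⟨g, hg, hadm, rfl⟩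
    by_contra! hlt
    obtain ⟨x, hx, hx0⟩ := exists_ne_zero_mem_lattice2_inter_unitDisc g hg hlt
    exact hx0 ((admissible2_iff (by simp [unitDisc]) g).1 hadm x hx)
end
end

section
/- Let K be a bounded open convex domain in ℝ² symmetric about the origin, with boundary C, and suppose points p₁, p₂ ∈ C satisfy p₃ := p₁ + p₂ ∈ C. Then the lattice generated by p₁ and p₂ is K-admissible, i.e. contains no nonzero point of K. -/
/-!
The gauge `p` of `K` is a seminorm with `p < 1` on `K` and `p = 1` on `C`. Writing
`m p₁ + n p₂ = (m - n) p₁ + n p₃ = (n - m) p₂ + m p₃`, the reverse triangle inequality gives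
`p (m p₁ + n p₂) ≥ ||m - n| - |n||` and `≥ ||n - m| - |m||`. Both bounds vanish only for
`m = n = 0`, and otherwise one of them is a positive integer, so `m p₁ + n p₂ ∉ K`.
-/

open MeasureTheory

noncomputable section

theorem Int.eq_zero_of_abs_sub_eq_abs_of_abs_sub_eq_abs {m n : ℤ} (hn : |m - n| = |n|)
    (hm : |n - m| = |m|) : m = 0 ∧ n = 0 := by
  rcases abs_eq_abs.1 hn with hn | hn <;> rcases abs_eq_abs.1 hm with hm | hm <;> omega

namespace Seminorm

theorem abs_norm_sub_norm_le_map_smul_add_smul {𝕜 E : Type*} [NormedField 𝕜] [AddCommGroup E]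
    [Module 𝕜 E] (p : Seminorm 𝕜 E) {u v : E} (hu : p u = 1) (hv : p v = 1) (s t : 𝕜) :
    |‖s‖ - ‖t‖| ≤ p (s • u + t • v) := by
  have h := p.norm_sub_map_le_sub (s • u) (-(t • v))
  rwa [map_neg_eq_map, sub_neg_eq_add, map_smul_eq_mul, map_smul_eq_mul, hu, hv, mul_one,
    mul_one, Real.norm_eq_abs] at h

variable {E : Type*} [AddCommGroup E] [Module ℝ E] (p : Seminorm ℝ E)

theorem abs_eq_abs_of_map_zsmul_add_zsmul_lt_one {u v : E} (hu : p u = 1) (hv : p v = 1)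
    {s t : ℤ} (h : p (s • u + t • v) < 1) : |s| = |t| := by
  have h' := p.abs_norm_sub_norm_le_map_smul_add_smul hu hv (s : ℝ) t
  simp only [Int.cast_smul_eq_zsmul, Real.norm_eq_abs, ← Int.cast_abs, ← Int.cast_sub] at h'
  have h'' : |(|s| - |t|)| < 1 := by exact_mod_cast h'.trans_lt h
  rw [abs_lt] at h''
  omega

theorem one_le_map_zsmul_add_zsmul {a b : E} (ha : p a = 1) (hb : p b = 1)
    (hab : p (a + b) = 1) {m n : ℤ} (hmn : ¬(m = 0 ∧ n = 0)) : 1 ≤ p (m • a + n • b) := by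
  by_contra! h
  have hn : |m - n| = |n| := p.abs_eq_abs_of_map_zsmul_add_zsmul_lt_one ha hab <| by
    rwa [show (m - n) • a + n • (a + b) = m • a + n • b by module]
  have hm : |n - m| = |m| := p.abs_eq_abs_of_map_zsmul_add_zsmul_lt_one hb hab <| by
    rwa [show (n - m) • b + m • (a + b) = m • a + n • b by module]
  exact hmn (Int.eq_zero_of_abs_sub_eq_abs_of_abs_sub_eq_abs hn hm)

end Seminorm

theorem Convex.zsmul_add_zsmul_eq_zero_of_mem_of_mem_frontier {E : Type*} [AddCommGroup E]
    [Module ℝ E] [TopologicalSpace E] [IsTopologicalAddGroup E] [ContinuousSMul ℝ E]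
    {K : Set E} (hconv : Convex ℝ K) (hopen : IsOpen K) (hsym : ∀ x ∈ K, -x ∈ K) {a b : E}
    (ha : a ∈ frontier K) (hb : b ∈ frontier K) (hab : a + b ∈ frontier K) {m n : ℤ}
    (hmem : m • a + n • b ∈ K) : m • a + n • b = 0 := by
  have hbal : Balanced ℝ K := (balanced_iff_neg_mem hconv).2 hsym
  have hK : K ∈ nhds 0 := hopen.mem_nhds (hbal.zero_mem ⟨_, hmem⟩)
  let p := gaugeSeminorm hbal hconv (absorbent_nhds_zero hK)
  have hp : ∀ x ∈ frontier K, p x = 1 := fun x hx ↦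
    (gauge_eq_one_iff_mem_frontier hconv hK).2 hx
  by_contra hne
  have hmn : ¬(m = 0 ∧ n = 0) := by
    rintro ⟨rfl, rfl⟩
    simp at hne
  exact (p.one_le_map_zsmul_add_zsmul (hp a ha) (hp b hb) (hp _ hab) hmn).not_gt
    (gaugeSeminorm_lt_one_of_isOpen hopen hmem)

theorem lattice_from_boundary_points_admissible_general (K : Set (Fin 2 → ℝ))
    (hopen : IsOpen K) (hconv : Convex ℝ K)
    (hsym : ∀ x ∈ K, -x ∈ K) (p₁ p₂ : Fin 2 → ℝ)
    (hp₁ : p₁ ∈ frontier K) (hp₂ : p₂ ∈ frontier K) (hp₃ : p₁ + p₂ ∈ frontier K) :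
    ∀ m n : ℤ, m • p₁ + n • p₂ ∈ K → m • p₁ + n • p₂ = 0 := fun _ _ ↦
  hconv.zsmul_add_zsmul_eq_zero_of_mem_of_mem_frontier hopen hsym hp₁ hp₂ hp₃

/-- If `p₁, p₂` and `p₁ + p₂` lie on the boundary of a bounded open convex symmetric
domain `K ⊂ ℝ²`, then the lattice generated by `p₁` and `p₂` contains no nonzero point
of `K`. -/
theorem lattice_from_boundary_points_admissible (K : Set (Fin 2 → ℝ))
    (hopen : IsOpen K) (hbdd : Bornology.IsBounded K) (hconv : Convex ℝ K)
    (hsym : ∀ x ∈ K, -x ∈ K) (p₁ p₂ : Fin 2 → ℝ)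
    (hp₁ : p₁ ∈ frontier K) (hp₂ : p₂ ∈ frontier K) (hp₃ : p₁ + p₂ ∈ frontier K) :
    ∀ m n : ℤ, m • p₁ + n • p₂ ∈ K → m • p₁ + n • p₂ = 0 :=
  lattice_from_boundary_points_admissible_general K hopen hconv hsym p₁ p₂ hp₁ hp₂ hp₃
end
end

section
/- If H ⊊ K are bounded open convex symmetric domains in ℝ², where H is a parallelogram (image of (-1,1)² under some g ∈ GL₂(ℝ)) with Δ(H) = V(H)/4, then Δ(H) < Δ(K); that is, a parallelogram cannot be a proper subdomain of K realizing the same critical determinant. -/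
open MeasureTheory

noncomputable section

/-! Minkowski's convex body theorem bounds the covolume of every `K`-admissible lattice below by
`V(K)/4`, and `K` being bounded has admissible lattices, so `V(K)/4 ≤ Δ(K)`. A parallelogram `H`
is open and convex, hence the interior of its closure, so near a point of `K \ H` the open set `K`
contains a nonempty open set disjoint from `H`, giving `V(H) < V(K)`. Together
`Δ(H) = V(H)/4 < V(K)/4 ≤ Δ(K)`. -/

open Matrix

theorem Convex.measure_lt_of_ssubset {E : Type*} [NormedAddCommGroup E] [NormedSpace ℝ E]
    [MeasurableSpace E] [BorelSpace E] [FiniteDimensional ℝ E] {μ : Measure E}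
    [μ.IsAddHaarMeasure] {H K : Set E} (hHconv : Convex ℝ H) (hHopen : IsOpen H)
    (hKopen : IsOpen K) (hHK : H ⊂ K) (hK : μ K ≠ ⊤) : μ H < μ K := by
  have hint : interior (closure H) = H := by
    rcases H.eq_empty_or_nonempty with rfl | hne
    · simp
    · rw [hHconv.interior_closure_eq_interior_of_nonempty_interior
        (hHopen.interior_eq.symm ▸ hne), hHopen.interior_eq]
  obtain ⟨z, hzK, hzH⟩ := Set.exists_of_ssubset hHK
  have hout : (K \ closure H).Nonempty := by
    by_contra h
    rw [Set.not_nonempty_iff_eq_empty, Set.sdiff_eq_empty] at h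
    exact hzH (hint ▸ interior_maximal h hKopen hzK)
  have hdisj : Disjoint H (K \ closure H) :=
    Set.disjoint_sdiff_right.mono_left subset_closure
  calc μ H < μ H + μ (K \ closure H) :=
        ENNReal.lt_add_right (ne_top_of_le_ne_top hK (measure_mono hHK.subset))
          ((hKopen.sdiff isClosed_closure).measure_pos μ hout).ne'
    _ = μ (H ∪ K \ closure H) :=
        (measure_union hdisj (hKopen.sdiff isClosed_closure).measurableSet).symm
    _ ≤ μ K := measure_mono (Set.union_subset hHK.subset Set.sdiff_subset)

theorem Matrix.isOpen_image_mulVec {n : Type*} [Fintype n] [DecidableEq n]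
    {g : Matrix n n ℝ} (hg : g.det ≠ 0) {S : Set (n → ℝ)} (hS : IsOpen S) :
    IsOpen ((fun x => g.mulVec x) '' S) := by
  have := g.invertibleOfIsUnitDet (isUnit_iff_ne_zero.2 hg)
  exact (g.toLinearEquiv' this).toContinuousLinearEquiv.isOpenMap S hS

theorem Matrix.convex_image_mulVec {n : Type*} [Fintype n] [DecidableEq n] (g : Matrix n n ℝ)
    {S : Set (n → ℝ)} (hS : Convex ℝ S) : Convex ℝ ((fun x => g.mulVec x) '' S) :=
  hS.linear_image (Matrix.toLin' g)

theorem Matrix.coe_basisFun_map_toLinearEquiv' {n R : Type*} [Fintype n] [DecidableEq n]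
    [CommRing R] (g : Matrix n n R) (hg : Invertible g) :
    ⇑((Pi.basisFun R n).map (g.toLinearEquiv' hg)) = gᵀ := by
  ext i j
  rw [Module.Basis.map_apply, Pi.basisFun_apply]
  change (g *ᵥ Pi.single i 1) j = g j i
  simp

theorem one_le_norm_intCast_of_ne_zero {n : Type*} [Fintype n] {m : n → ℤ} (hm : m ≠ 0) :
    1 ≤ ‖fun i => (m i : ℝ)‖ := by
  obtain ⟨i, hi⟩ := Function.ne_iff.1 hm
  calc (1 : ℝ) ≤ |(m i : ℝ)| := by exact_mod_cast Int.one_le_abs hi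
    _ ≤ ‖fun i => (m i : ℝ)‖ := norm_le_pi_norm (fun i => (m i : ℝ)) i

theorem openSquare_eq_ball : openSquare = Metric.ball 0 1 := by
  ext x
  simp [openSquare, pi_norm_lt_iff, Fin.forall_fin_two]

theorem lattice2_eq_span (g : Matrix (Fin 2) (Fin 2) ℝ) (hg : Invertible g) :
    lattice2 g = Submodule.span ℤ
      (Set.range ((Pi.basisFun ℝ (Fin 2)).map (g.toLinearEquiv' hg))) := by
  ext x
  rw [SetLike.mem_coe, Submodule.mem_span_range_iff_exists_fun,
    Matrix.coe_basisFun_map_toLinearEquiv']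
  simp only [lattice2, Set.mem_ofPred_eq, Matrix.mulVec_eq_sum, op_smul_eq_smul,
    Int.cast_smul_eq_zsmul, eq_comm]

theorem volume_le_four_mul_abs_det_of_admissible2 {K : Set (Fin 2 → ℝ)} (hKconv : Convex ℝ K)
    (hKsym : ∀ x ∈ K, -x ∈ K) {g : Matrix (Fin 2) (Fin 2) ℝ} (hg : g.det ≠ 0)
    (hadm : Admissible2 K g) : volume K ≤ 4 * ENNReal.ofReal |g.det| := by
  by_contra! hlt
  have hinv : Invertible g := g.invertibleOfIsUnitDet (isUnit_iff_ne_zero.2 hg)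
  set b := (Pi.basisFun ℝ (Fin 2)).map (g.toLinearEquiv' hinv)
  have : Countable (Submodule.span ℤ (Set.range b)).toAddSubgroup :=
    inferInstanceAs (Countable (Submodule.span ℤ (Set.range b)))
  have hdet : (Matrix.of b).det = g.det := by
    rw [Matrix.coe_basisFun_map_toLinearEquiv']
    exact g.det_transpose
  obtain ⟨x, hx0, hxK⟩ := exists_ne_zero_mem_lattice_of_measure_mul_two_pow_lt_measure
    (ZSpan.isAddFundamentalDomain' b volume) hKsym hKconv (by
      rw [ZSpan.volume_fundamentalDomain, hdet, Module.finrank_fin_fun, mul_comm]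
      norm_num [hlt])
  have hx : (x : Fin 2 → ℝ) ∈ lattice2 g ∩ K := ⟨lattice2_eq_span g hinv ▸ x.2, hxK⟩
  rw [hadm] at hx
  exact hx0 (Subtype.ext hx)

theorem exists_admissible2_of_isBounded {K : Set (Fin 2 → ℝ)} (hKbdd : Bornology.IsBounded K)
    (h0K : 0 ∈ K) : ∃ g : Matrix (Fin 2) (Fin 2) ℝ, g.det ≠ 0 ∧ Admissible2 K g := by
  obtain ⟨R, hR0, hR⟩ := hKbdd.exists_pos_norm_lt
  refine ⟨R • 1, by simp [hR0.ne'], ?_⟩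
  refine Set.eq_singleton_iff_unique_mem.2 ⟨⟨⟨0, by simp [← Pi.zero_def]⟩, h0K⟩, ?_⟩
  rintro _ ⟨⟨m, rfl⟩, hmK⟩
  rw [Matrix.smul_mulVec, Matrix.one_mulVec] at hmK ⊢
  by_contra hne
  have hm : m ≠ 0 := by
    rintro rfl
    exact hne (by ext; simp)
  have := hR _ hmK
  rw [norm_smul, Real.norm_of_nonneg hR0.le] at this
  nlinarith [one_le_norm_intCast_of_ne_zero hm]

theorem volume_toReal_div_four_le_critDet2 {K : Set (Fin 2 → ℝ)} (hKconv : Convex ℝ K)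
    (hKsym : ∀ x ∈ K, -x ∈ K)
    (hadm : ∃ g : Matrix (Fin 2) (Fin 2) ℝ, g.det ≠ 0 ∧ Admissible2 K g) :
    (volume K).toReal / 4 ≤ critDet2 K := by
  obtain ⟨g₀, hg₀, hadm₀⟩ := hadm
  refine le_csInf ⟨_, g₀, hg₀, hadm₀, rfl⟩ ?_
  rintro _ ⟨g, hg, hadm, rfl⟩
  have := ENNReal.toReal_mono (by finiteness)
    (volume_le_four_mul_abs_det_of_admissible2 hKconv hKsym hg hadm)
  rw [ENNReal.toReal_mul, ENNReal.toReal_ofReal (abs_nonneg _)] at this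
  norm_num at this
  linarith

/-- A parallelogram cannot be a proper subdomain of `K` realizing the same critical
determinant: if `H ⊊ K` is a parallelogram with `Δ(H) = V(H)/4`, then `Δ(H) < Δ(K)`. -/
theorem parallelogram_proper_subdomain_smaller_critDet (H K : Set (Fin 2 → ℝ))
    (hKopen : IsOpen K) (hKbdd : Bornology.IsBounded K) (hKconv : Convex ℝ K)
    (hKsym : ∀ x ∈ K, -x ∈ K)
    (hHK : H ⊆ K) (hne : H ≠ K)
    (hpar : ∃ g : Matrix (Fin 2) (Fin 2) ℝ, g.det ≠ 0 ∧
      H = (fun x => g.mulVec x) '' openSquare)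
    (hΔH : critDet2 H = (volume H).toReal / 4) :
    critDet2 H < critDet2 K := by
  obtain ⟨g, hg, rfl⟩ := hpar
  have h0H : (0 : Fin 2 → ℝ) ∈ (fun x => g.mulVec x) '' openSquare :=
    ⟨0, openSquare_eq_ball ▸ Metric.mem_ball_self one_pos, g.mulVec_zero⟩
  have hvol : volume ((fun x => g.mulVec x) '' openSquare) < volume K := by
    rw [openSquare_eq_ball] at hHK hne ⊢
    exact (g.convex_image_mulVec (convex_ball 0 1)).measure_lt_of_ssubset
      (g.isOpen_image_mulVec hg Metric.isOpen_ball) hKopen (hHK.ssubset_of_ne hne)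
      hKbdd.measure_lt_top.ne
  calc critDet2 _ = (volume _).toReal / 4 := hΔH
    _ < (volume K).toReal / 4 := (div_lt_div_iff_of_pos_right four_pos).2
      (ENNReal.toReal_strict_mono hKbdd.measure_lt_top.ne hvol)
    _ ≤ critDet2 K := volume_toReal_div_four_le_critDet2 hKconv hKsym
      (exists_admissible2_of_isBounded hKbdd (hHK h0H))
end
end
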